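/- arXiv:2509.25425 — 4 statements merged into one kernel-verified Lean document; each statement's English description precedes it below -/
import Mathlib

section
/- For all positive integers t and n, the matrix P_n satisfies P_n² = t · J_{t·4^n}. -/
open Matrix Kronecker

/-! Split every index of `P_n` as `(a, b, c) ∈ 2ⁿ × 2ⁿ × t` following the Kronecker structure of
its rows. Read as a column, the same index lies in block `a` of `J_{2ⁿ,1} ⊗ K_{2ⁿ}`, so
`P_n (a, b, c) (a', b', c') = K b a'`. Hence `P_n² (a, b, c) (a'', b'', c'')` is the sum of
`K b a' * K b' a''` over `(a', b', c')`, which is `t` because `K` is a permutation matrix. -/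

def Jmat (m l : ℕ) : Matrix (Fin m) (Fin l) ℤ := Matrix.of fun _ _ => 1
def Kmat (m : ℕ) : Matrix (Fin m) (Fin m) ℤ :=
  Matrix.of fun i j => if (j : ℕ) = m - 1 - (i : ℕ) then 1 else 0
def kron {m n p q : ℕ} (A : Matrix (Fin m) (Fin n) ℤ) (B : Matrix (Fin p) (Fin q) ℤ) :
    Matrix (Fin (m * p)) (Fin (n * q)) ℤ :=
  Matrix.reindex finProdFinEquiv finProdFinEquiv (A ⊗ₖ B)
def castM {m n m' n' : ℕ} (hm : m = m') (hn : n = n') (A : Matrix (Fin m) (Fin n) ℤ) :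
    Matrix (Fin m') (Fin n') ℤ :=
  Matrix.reindex (finCongr hm) (finCongr hn) A
def alphaM {m l : ℕ} (s : ℕ) (X : Matrix (Fin m) (Fin l) ℤ) :
    Matrix (Fin (m / s)) (Fin l) ℤ :=
  Matrix.of fun i j => X (Fin.castLE (Nat.div_le_self m s) i) j
def vstack {m₁ m₂ l : ℕ} (X : Matrix (Fin m₁) (Fin l) ℤ) (Y : Matrix (Fin m₂) (Fin l) ℤ) :
    Matrix (Fin (m₁ + m₂)) (Fin l) ℤ :=
  Matrix.reindex finSumFinEquiv (Equiv.refl _) (Matrix.fromRows X Y)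
def hstack {m l₁ l₂ : ℕ} (X : Matrix (Fin m) (Fin l₁) ℤ) (Y : Matrix (Fin m) (Fin l₂) ℤ) :
    Matrix (Fin m) (Fin (l₁ + l₂)) ℤ :=
  Matrix.reindex (Equiv.refl _) finSumFinEquiv (Matrix.fromCols X Y)
def block2 {a b c d : ℕ} (A : Matrix (Fin a) (Fin c) ℤ) (B : Matrix (Fin a) (Fin d) ℤ)
    (C : Matrix (Fin b) (Fin c) ℤ) (D : Matrix (Fin b) (Fin d) ℤ) :
    Matrix (Fin (a + b)) (Fin (c + d)) ℤ :=
  Matrix.reindex finSumFinEquiv finSumFinEquiv (Matrix.fromBlocks A B C D)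
lemma four_pow_eq (n : ℕ) : (4 : ℕ) ^ n = 2 ^ n * 2 ^ n := by
  rw [show (4 : ℕ) = 2 * 2 from rfl, mul_pow]
lemma t_four_pow_div (t n : ℕ) : t * 4 ^ n / 2 ^ n = t * 2 ^ n := by
  rw [four_pow_eq, ← mul_assoc, Nat.mul_div_cancel _ (by positivity)]
def vnum (v t n : ℕ) : ℕ := (v + (2 ^ (n + 1) - 4) * t) * 2 ^ (n - 1)
lemma vnum_one (v t : ℕ) : vnum v t 1 = v := by norm_num [vnum]
lemma vnum_succ (v t n : ℕ) :
    vnum v t (n + 2) = 2 * vnum v t (n + 1) + 2 * (t * 4 ^ (n + 1)) := by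
  unfold vnum
  simp only [show n + 2 + 1 = n + 3 from rfl, show n + 2 - 1 = n + 1 from rfl,
    show n + 1 + 1 = n + 2 from rfl, show n + 1 - 1 = n from rfl]
  have h2 : (4 : ℕ) ≤ 2 ^ (n + 2) := by
    calc (4 : ℕ) = 2 ^ 2 := rfl
    _ ≤ 2 ^ (n + 2) := Nat.pow_le_pow_right (by norm_num) (by omega)
  have h3 : (4 : ℕ) ≤ 2 ^ (n + 3) := le_trans h2 (Nat.pow_le_pow_right (by norm_num) (by omega))
  rw [four_pow_eq]
  zify [h2, h3]
  ring
def Pmat (t n : ℕ) : Matrix (Fin (t * 4 ^ n)) (Fin (t * 4 ^ n)) ℤ :=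
  castM (by rw [four_pow_eq]; ring) (by rw [four_pow_eq]; ring)
    (kron (kron (Jmat (2 ^ n) 1) (Kmat (2 ^ n))) (Jmat t (t * 2 ^ n)))
def Pone (t : ℕ) : Matrix (Fin (4 * t)) (Fin (4 * t)) ℤ :=
  castM (by ring) (by ring) (kron (kron (Jmat 2 1) (Kmat 2)) (Jmat t (2 * t)))

/-- The recursively defined sequence `P'_n` of Lemma 2. -/
def P'mat (t : ℕ) : (n : ℕ) → Matrix (Fin (t * 4 ^ n)) (Fin (t * 4 ^ n)) ℤ
  | 0 => 0
  | 1 => castM (by ring) (by ring) (kron (kron (Jmat 2 1) (Kmat 2)) (Jmat t (2 * t)))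
  | (n + 2) =>
      castM
        (by rw [t_four_pow_div, four_pow_eq]; ring)
        (by ring)
        (kron (kron (kron (Jmat (2 ^ (n + 2)) 1) (Kmat 2))
          (alphaM (2 ^ (n + 1)) (P'mat t (n + 1)))) (Jmat 1 2))

/-- The recursively defined sequence `B_n` (with `B_1` given). -/
def Bmat (t v : ℕ) (B₁ : Matrix (Fin v) (Fin (4 * t)) ℤ) :
    (n : ℕ) → Matrix (Fin (vnum v t n)) (Fin (t * 4 ^ n)) ℤ
  | 0 => 0
  | 1 => castM (vnum_one v t).symm (by ring) B₁
  | (n + 2) =>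
      castM (by rw [vnum_succ]; try ring) (by ring)
        (vstack (kron (kron (Kmat 2) (Bmat t v B₁ (n + 1))) (Jmat 1 2))
          (kron (kron (1 : Matrix (Fin 2) (Fin 2) ℤ) (Pmat t (n + 1))) (Jmat 1 2)))

/-- The recursively defined sequence `C_n` (with `C_1` given). -/
def Cmat (t v : ℕ) (C₁ : Matrix (Fin (4 * t)) (Fin v) ℤ) :
    (n : ℕ) → Matrix (Fin (t * 4 ^ n)) (Fin (vnum v t n)) ℤ
  | 0 => 0
  | 1 => castM (by ring) (vnum_one v t).symm C₁
  | (n + 2) =>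
      castM (by rw [t_four_pow_div, four_pow_eq]; ring) (by rw [vnum_succ]; try ring)
        (hstack
          (kron (kron (Jmat (2 ^ (n + 2)) 1) (1 : Matrix (Fin 2) (Fin 2) ℤ))
            (alphaM (2 ^ (n + 1)) (Cmat t v C₁ (n + 1))))
          (kron (kron (Jmat (2 ^ (n + 2)) 1) (1 : Matrix (Fin 2) (Fin 2) ℤ))
            (alphaM (2 ^ (n + 1)) (Pmat t (n + 1)))))

/-- The recursively defined sequence `A_n` (with `A_1`, `B_1`, `C_1` given). -/
def Amat (t v : ℕ) (A₁ : Matrix (Fin v) (Fin v) ℤ) (B₁ : Matrix (Fin v) (Fin (4 * t)) ℤ)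
    (C₁ : Matrix (Fin (4 * t)) (Fin v) ℤ) :
    (n : ℕ) → Matrix (Fin (vnum v t n)) (Fin (vnum v t n)) ℤ
  | 0 => 0
  | 1 => castM (vnum_one v t).symm (vnum_one v t).symm A₁
  | (n + 2) =>
      castM (by rw [vnum_succ]) (by rw [vnum_succ])
        (block2 (kron (1 : Matrix (Fin 2) (Fin 2) ℤ) (Amat t v A₁ B₁ C₁ (n + 1)))
          (kron (1 : Matrix (Fin 2) (Fin 2) ℤ) (Bmat t v B₁ (n + 1)))
          (kron (Kmat 2) (Cmat t v C₁ (n + 1)))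
          (kron (Kmat 2) (Pmat t (n + 1))))

theorem Matrix.mul_self_eq_card_smul_of_apply_eq {R ι β γ : Type*} [CommSemiring R]
    [Fintype ι] [Fintype β] [Fintype γ] (e : (β × β) × γ ≃ ι) (M : Matrix β β R)
    (hrow : ∀ b, ∑ a, M b a = 1) (hcol : ∀ a, ∑ b, M b a = 1) {P : Matrix ι ι R}
    (hP : ∀ i j, P i j = M (e.symm i).1.2 (e.symm j).1.1) :
    P * P = (Fintype.card γ : R) • Matrix.of fun _ _ => 1 := by
  ext i j
  set b := (e.symm i).1.2
  set a := (e.symm j).1.1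
  calc (P * P) i j = ∑ x : (β × β) × γ, M b x.1.1 * M x.1.2 a := by
        rw [mul_apply, ← e.sum_comp]
        simp only [hP, e.symm_apply_apply, b, a]
    _ = Fintype.card γ * ((∑ y, M b y) * ∑ x, M x a) := by
        rw [Finset.sum_mul_sum]
        simp only [Fintype.sum_prod_type, Finset.sum_const, Finset.card_univ, nsmul_eq_mul,
          Finset.mul_sum]
    _ = _ := by simp [hrow, hcol]

lemma Kmat_apply (m : ℕ) (i j : Fin m) : Kmat m i j = if j = i.rev then 1 else 0 := by
  simp only [Kmat, of_apply, Fin.ext_iff, Fin.val_rev]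
  congr 2
  omega

lemma sum_Kmat_row (m : ℕ) (i : Fin m) : ∑ j, Kmat m i j = 1 := by
  simp [Kmat_apply]

lemma sum_Kmat_col (m : ℕ) (j : Fin m) : ∑ i, Kmat m i j = 1 := by
  simp_rw [Kmat_apply, eq_comm (a := j), Fin.rev_eq_iff]
  simp

lemma add_mul_add_mul_div_mul_of_lt {t m a b c : ℕ} (hc : c < t) (hb : b < m) :
    (c + t * (b + m * a)) / (t * m) = a := by
  have hcb : c + t * b < t * m := by nlinarith
  rw [show c + t * (b + m * a) = c + t * b + t * m * a by ring,
    Nat.add_mul_div_left _ _ (by omega), Nat.div_eq_of_lt hcb, zero_add]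

def pmatIndexEquiv (t n : ℕ) : (Fin (2 ^ n) × Fin (2 ^ n)) × Fin t ≃ Fin (t * 4 ^ n) :=
  ((finProdFinEquiv.prodCongr (Equiv.refl _)).trans finProdFinEquiv).trans
    (finCongr (by rw [four_pow_eq]; ring))

lemma Pmat_pmatIndexEquiv (t n : ℕ) (x y : (Fin (2 ^ n) × Fin (2 ^ n)) × Fin t) :
    Pmat t n (pmatIndexEquiv t n x) (pmatIndexEquiv t n y) = Kmat (2 ^ n) x.1.2 y.1.1 := by
  simp only [Pmat, castM, kron, pmatIndexEquiv, Jmat, reindex_apply, submatrix_apply,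
    kroneckerMap_apply, of_apply, mul_one, one_mul, Equiv.trans_apply, finCongr_symm,
    finCongr_apply, Fin.cast_cast, Fin.cast_eq_self]
  congr 1
  · simp
  · ext
    simp only [finProdFinEquiv_symm_apply, Fin.coe_modNat, Fin.coe_divNat, Fin.val_cast,
      finProdFinEquiv_apply_val, Equiv.prodCongr_apply, Prod.map, Equiv.refl_apply]
    rw [add_mul_add_mul_div_mul_of_lt y.2.isLt y.1.2.isLt, Nat.mod_eq_of_lt y.1.1.isLt]

theorem Pmat_sq_general (t n : ℕ) :
    Pmat t n * Pmat t n = (t : ℤ) • Jmat (t * 4 ^ n) (t * 4 ^ n) := by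
  have h := Matrix.mul_self_eq_card_smul_of_apply_eq (pmatIndexEquiv t n) (Kmat (2 ^ n))
    (sum_Kmat_row _) (sum_Kmat_col _) (P := Pmat t n) fun i j => by
      rw [← Pmat_pmatIndexEquiv, Equiv.apply_symm_apply, Equiv.apply_symm_apply]
  rw [h, Fintype.card_fin]
  rfl

/-- Lemma 1(2): `P_n² = t · J`. -/
theorem Pmat_sq (t n : ℕ) (ht : 0 < t) (hn : 1 ≤ n) :
    Pmat t n * Pmat t n = (t : ℤ) • Jmat (t * 4 ^ n) (t * 4 ^ n) :=
  Pmat_sq_general t n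
end

section
/- For every n ≥ 1, each row of the matrix B_n contains exactly t·2^n ones; equivalently, B_n · J_{t·4^n} = t·2^n · J (of the appropriate rectangular size). -/
open Matrix Kronecker

/-!
Row sums multiply under Kronecker products and are unchanged by reindexing and by stacking
blocks with equal row sums. Since `K_m` and `I_2` have row sums `1` and `J_{m,l}` has row sum
`l`, the row sum of `P_n` is `t·2^n`, and both blocks of `B_{n+1}` have row sum
`1 · t·2^n · 2`; induction on `n` starting from `B_1 J = 2t J` gives the claim.
-/

namespace Matrix

variable {m m' n n' p q α : Type*}

def HasRowSum [Fintype n] [AddCommMonoid α] (A : Matrix m n α) (c : α) : Prop :=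
  ∀ i, ∑ j, A i j = c

section AddCommMonoid

variable [Fintype n] [AddCommMonoid α] {A : Matrix m n α} {c : α}

theorem HasRowSum.reindex [Fintype n'] (e : m ≃ m') (f : n ≃ n') (h : A.HasRowSum c) :
    (reindex e f A).HasRowSum c := fun i => by
  simpa only [reindex_apply, submatrix_apply] using (f.symm.sum_comp _).trans (h (e.symm i))

theorem HasRowSum.fromRows {B : Matrix p n α} (hA : A.HasRowSum c) (hB : B.HasRowSum c) :
    (fromRows A B).HasRowSum c
  | .inl i => hA i
  | .inr i => hB i

end AddCommMonoid

theorem HasRowSum.kronecker [Fintype n] [Fintype q] [NonUnitalNonAssocSemiring α]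
    {A : Matrix m n α} {B : Matrix p q α} {a b : α} (hA : A.HasRowSum a) (hB : B.HasRowSum b) :
    (A ⊗ₖ B).HasRowSum (a * b) := fun i => by
  simp only [kroneckerMap_apply, Fintype.sum_prod_type, ← Finset.sum_mul_sum, hA i.1, hB i.2]

theorem HasRowSum.mul_of_one [Fintype n] [Fintype p] [Semiring α] {A : Matrix m n α} {c : α}
    (h : A.HasRowSum c) :
    A * of (fun (_ : n) (_ : p) => (1 : α)) = c • of fun (_ : m) (_ : p) => 1 := by
  ext i j
  simpa [mul_apply] using h i

theorem hasRowSum_one [Fintype n] [DecidableEq n] [NonAssocSemiring α] :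
    (1 : Matrix n n α).HasRowSum 1 := fun i => by
  simp [one_apply]

theorem hasRowSum_of_mul_of_one [Fintype n] [Fintype p] [Nonempty p] [Semiring α]
    {A : Matrix m n α} {c : α}
    (h : A * of (fun (_ : n) (_ : p) => (1 : α)) = c • of fun (_ : m) (_ : p) => 1) :
    A.HasRowSum c := fun i => by
  simpa [mul_apply] using congrFun (congrFun h i) (Classical.arbitrary p)

end Matrix

open Matrix

theorem hasRowSum_Jmat (m l : ℕ) : (Jmat m l).HasRowSum (l : ℤ) := fun _ => by
  simp [Jmat]

theorem hasRowSum_Kmat {m : ℕ} (hm : 0 < m) : (Kmat m).HasRowSum 1 := fun i => by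
  have hj : m - 1 - (i : ℕ) < m := (Nat.sub_le _ _).trans_lt (Nat.sub_lt hm one_pos)
  simp only [Kmat, of_apply, ← Fin.ext_iff (b := ⟨m - 1 - i, hj⟩), Finset.sum_ite_eq',
    Finset.mem_univ, if_true]

theorem Matrix.HasRowSum.kron {m n p q : ℕ} {A : Matrix (Fin m) (Fin n) ℤ}
    {B : Matrix (Fin p) (Fin q) ℤ} {a b : ℤ} (hA : A.HasRowSum a) (hB : B.HasRowSum b) : (kron A B).HasRowSum (a * b) :=
  (hA.kronecker hB).reindex _ _

theorem Matrix.HasRowSum.castM {m n m' n' : ℕ} (hm : m = m') (hn : n = n')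
    {A : Matrix (Fin m) (Fin n) ℤ} {c : ℤ} (hA : A.HasRowSum c) : (castM hm hn A).HasRowSum c :=
  hA.reindex _ _

theorem Matrix.HasRowSum.vstack {m₁ m₂ l : ℕ} {X : Matrix (Fin m₁) (Fin l) ℤ}
    {Y : Matrix (Fin m₂) (Fin l) ℤ} {c : ℤ} (hX : X.HasRowSum c) (hY : Y.HasRowSum c) :
    (vstack X Y).HasRowSum c :=
  (hX.fromRows hY).reindex _ _

theorem hasRowSum_Pmat (t n : ℕ) : (Pmat t n).HasRowSum (t * 2 ^ n) := by
  refine HasRowSum.castM _ _ ?_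
  convert ((hasRowSum_Jmat (2 ^ n) 1).kron (hasRowSum_Kmat (Nat.two_pow_pos n))).kron
    (hasRowSum_Jmat t (t * 2 ^ n)) using 1
  push_cast
  ring

theorem hasRowSum_Bmat (t v : ℕ) {B₁ : Matrix (Fin v) (Fin (4 * t)) ℤ} (hB : B₁.HasRowSum (2 * t))
    (n : ℕ) : (Bmat t v B₁ (n + 1)).HasRowSum (t * 2 ^ (n + 1)) := by
  induction n with
  | zero =>
    refine HasRowSum.castM _ _ ?_
    convert hB using 1
    ring
  | succ n ih =>
    simp only [Bmat]
    refine HasRowSum.castM _ _ (HasRowSum.vstack ?_ ?_)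
    · convert ((hasRowSum_Kmat two_pos).kron ih).kron (hasRowSum_Jmat 1 2) using 1
      push_cast
      ring
    · convert (hasRowSum_one.kron (hasRowSum_Pmat t (n + 1))).kron (hasRowSum_Jmat 1 2) using 1
      push_cast
      ring

theorem Bmat_row_sum_general
    (t v : ℕ) (ht : 0 < t)
    (B₁ : Matrix (Fin v) (Fin (4 * t)) ℤ)
    (hBJ : B₁ * Jmat (4 * t) (4 * t) = (2 * (t : ℤ)) • Jmat v (4 * t))
    (n : ℕ) (hn : 1 ≤ n) :
    Bmat t v B₁ n * Jmat (t * 4 ^ n) (t * 4 ^ n) =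
      ((t : ℤ) * 2 ^ n) • Jmat (vnum v t n) (t * 4 ^ n) := by
  obtain ⟨n, rfl⟩ := Nat.exists_eq_add_of_le' hn
  have : NeZero (4 * t) := ⟨by omega⟩
  exact (hasRowSum_Bmat t v (hasRowSum_of_mul_of_one hBJ) n).mul_of_one

/-- Lemma 3(1): each row of `B_n` contains exactly `t·2^n` ones. -/
theorem Bmat_row_sum
    (t v k : ℕ) (ht : 0 < t) (hv : 0 < v) (hk : 0 < k)
    (B₁ : Matrix (Fin v) (Fin (4 * t)) ℤ) (C₁ : Matrix (Fin (4 * t)) (Fin v) ℤ)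
    (hB01 : ∀ i j, B₁ i j = 0 ∨ B₁ i j = 1) (hC01 : ∀ i j, C₁ i j = 0 ∨ C₁ i j = 1)
    (hBJ : B₁ * Jmat (4 * t) (4 * t) = (2 * (t : ℤ)) • Jmat v (4 * t))
    (hJB : Jmat v v * B₁ = (k : ℤ) • Jmat v (4 * t))
    (hCJ : C₁ * Jmat v v = (k : ℤ) • Jmat (4 * t) v)
    (hJC : Jmat (4 * t) (4 * t) * C₁ = (2 * (t : ℤ)) • Jmat (4 * t) v)
    (n : ℕ) (hn : 1 ≤ n) :
    Bmat t v B₁ n * Jmat (t * 4 ^ n) (t * 4 ^ n) =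
      ((t : ℤ) * 2 ^ n) • Jmat (vnum v t n) (t * 4 ^ n) :=
  Bmat_row_sum_general t v ht B₁ hBJ n hn
end

section
/- For every n ≥ 1, if any row of B_n is partitioned into 2^n consecutive blocks of length t·2^n, then exactly one of these blocks consists entirely of ones and all the remaining blocks consist entirely of zeros. -/
open Matrix Kronecker

/-! Say that a matrix has block rows of length `L` if each of its rows is the indicator of a
single block of `L` consecutive columns. If every row of `A` has exactly one `1`, this property
passes from `B` to `A ⊗ B`: the `1` in the row of `A` selects a segment of columns, and the block
of the row of `B` selects the block inside that segment. Stretching columns by `⊗ J_{1,2}`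
doubles the block length. Since `K_2`, `I_2` and `J_{2^n,1} ⊗ K_{2^n}` have one `1` per row, `P_n`
has block rows of length `t·2^n`, and the recursion carries the property from `B_1` (block length
`2t`) to every `B_n`. -/

lemma kron_apply {m n p q : ℕ} (A : Matrix (Fin m) (Fin n) ℤ) (B : Matrix (Fin p) (Fin q) ℤ)
    (i : Fin (m * p)) (j : Fin (n * q)) :
    kron A B i j = A i.divNat j.divNat * B i.modNat j.modNat := by
  simp [kron, finProdFinEquiv_symm_apply]

@[simp]
lemma vstack_castAdd {m₁ m₂ l : ℕ} (X : Matrix (Fin m₁) (Fin l) ℤ)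
    (Y : Matrix (Fin m₂) (Fin l) ℤ) (i : Fin m₁) : vstack X Y (Fin.castAdd m₂ i) = X i := by
  ext j
  simp [vstack]

@[simp]
lemma vstack_natAdd {m₁ m₂ l : ℕ} (X : Matrix (Fin m₁) (Fin l) ℤ)
    (Y : Matrix (Fin m₂) (Fin l) ℤ) (i : Fin m₂) : vstack X Y (Fin.natAdd m₁ i) = Y i := by
  ext j
  simp [vstack]

lemma div_eq_mul_add_iff {j L M a b : ℕ} (hb : b < M) :
    j / L = a * M + b ↔ j / (L * M) = a ∧ j % (L * M) / L = b := by
  rw [← Nat.div_div_eq_div_mul, Nat.mod_mul_right_div_self, Nat.div_mod_unique (by omega)]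
  constructor
  · rintro h; exact ⟨by rw [h]; ring, hb⟩
  · rintro ⟨h, -⟩; rw [← h]; ring

def blockIndicator {N : ℕ} (L b : ℕ) : Fin N → ℤ := fun j => if (j : ℕ) / L = b then 1 else 0

lemma blockIndicator_apply {N L b : ℕ} (j : Fin N) :
    blockIndicator L b j = if (j : ℕ) / L = b then 1 else 0 := rfl

lemma eq_of_blockIndicator_eq {N L M b b' : ℕ} (hL : 0 < L) (hN : L * M ≤ N) (hb : b < M)
    (h : (blockIndicator L b : Fin N → ℤ) = blockIndicator L b') : b = b' := by
  have hj : L * b < N := (Nat.mul_lt_mul_left hL).mpr hb |>.trans_le hN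
  simpa [blockIndicator_apply, Nat.mul_div_cancel_left _ hL] using congrFun h ⟨L * b, hj⟩

def HasBlockRows {m N : ℕ} (L M : ℕ) (X : Matrix (Fin m) (Fin N) ℤ) : Prop :=
  ∀ i, ∃ b < M, X i = blockIndicator L b

namespace HasBlockRows

variable {m m' N N' L M : ℕ}

lemma castM {X : Matrix (Fin m) (Fin N) ℤ} (hX : HasBlockRows L M X) (hm : m = m')
    (hN : N = N') : HasBlockRows L M (castM hm hN X) := by
  intro i
  obtain ⟨b, hb, hrow⟩ := hX (Fin.cast hm.symm i)
  exact ⟨b, hb, funext fun j => congrFun hrow (Fin.cast hN.symm j)⟩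

lemma vstack {X : Matrix (Fin m) (Fin N) ℤ} {Y : Matrix (Fin m') (Fin N) ℤ}
    (hX : HasBlockRows L M X) (hY : HasBlockRows L M Y) : HasBlockRows L M (vstack X Y) := by
  intro i
  obtain ⟨i, rfl⟩ := finSumFinEquiv.surjective i
  cases i with
  | inl i => simpa using hX i
  | inr i => simpa using hY i

lemma kron_Jmat {X : Matrix (Fin m) (Fin N) ℤ} (hX : HasBlockRows L M X) (r s : ℕ) :
    HasBlockRows (s * L) M (kron X (Jmat r s)) := by
  intro i
  obtain ⟨b, hb, hrow⟩ := hX i.divNat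
  refine ⟨b, hb, funext fun j => ?_⟩
  rw [kron_apply, hrow]
  simp [blockIndicator_apply, Jmat, Fin.coe_divNat, Nat.div_div_eq_div_mul]

lemma kron {Ma q : ℕ} {A : Matrix (Fin m) (Fin N) ℤ} {B : Matrix (Fin m') (Fin q) ℤ}
    (hA : HasBlockRows 1 Ma A) (hB : HasBlockRows L M B) (hq : q = L * M) :
    HasBlockRows L (Ma * M) (kron A B) := by
  subst hq
  intro i
  obtain ⟨a, ha, hArow⟩ := hA i.divNat
  obtain ⟨b, hb, hBrow⟩ := hB i.modNat
  refine ⟨a * M + b, ?_, funext fun j => ?_⟩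
  · calc a * M + b < a * M + M := by omega
      _ ≤ Ma * M := by rw [← Nat.succ_mul]; exact Nat.mul_le_mul_right _ ha
  rw [kron_apply, hArow, hBrow, blockIndicator_apply, blockIndicator_apply, blockIndicator_apply,
    ite_zero_mul_ite_zero, mul_one]
  simp only [Fin.coe_divNat, Fin.coe_modNat, Nat.div_one, div_eq_mul_add_iff hb]

end HasBlockRows

lemma hasBlockRows_Jmat (m l : ℕ) : HasBlockRows l 1 (Jmat m l) := fun _ =>
  ⟨0, one_pos, funext fun j => by simp [blockIndicator_apply, Jmat, Nat.div_eq_of_lt j.isLt]⟩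

lemma hasBlockRows_Kmat (m : ℕ) : HasBlockRows 1 m (Kmat m) := fun i =>
  ⟨m - 1 - i, by omega, funext fun j => by simp [blockIndicator_apply, Kmat]⟩

lemma hasBlockRows_one (m : ℕ) : HasBlockRows 1 m (1 : Matrix (Fin m) (Fin m) ℤ) := fun i =>
  ⟨i, i.isLt, funext fun j => by simp [blockIndicator_apply, Matrix.one_apply, Fin.ext_iff, eq_comm]⟩

lemma hasBlockRows_Pmat (t n : ℕ) : HasBlockRows (t * 2 ^ n) (2 ^ n) (Pmat t n) := by
  have hJK := (hasBlockRows_Jmat (2 ^ n) 1).kron (hasBlockRows_Kmat (2 ^ n)) (one_mul _).symm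
  have h := hJK.kron (hasBlockRows_Jmat t (t * 2 ^ n)) (mul_one _).symm
  rw [show 1 * 2 ^ n * 1 = 2 ^ n by ring] at h
  exact h.castM _ _

lemma hasBlockRows_Bmat (t v : ℕ) (B₁ : Matrix (Fin v) (Fin (4 * t)) ℤ)
    (hB₁ : HasBlockRows (2 * t) 2 B₁) (n : ℕ) :
    HasBlockRows (t * 2 ^ (n + 1)) (2 ^ (n + 1)) (Bmat t v B₁ (n + 1)) := by
  induction n with
  | zero => simpa [Bmat, mul_comm t] using hB₁.castM (vnum_one v t).symm (by ring)
  | succ n ih =>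
    have top := (((hasBlockRows_Kmat 2).kron ih (by rw [four_pow_eq]; ring)).kron_Jmat 1 2)
    have bot := (((hasBlockRows_one 2).kron (hasBlockRows_Pmat t (n + 1))
      (by rw [four_pow_eq]; ring)).kron_Jmat 1 2)
    rw [show 2 * (t * 2 ^ (n + 1)) = t * 2 ^ (n + 2) by ring,
      show 2 * 2 ^ (n + 1) = 2 ^ (n + 2) by ring] at top bot
    exact (top.vstack bot).castM _ _

theorem Bmat_row_blockiness_general
    (t v : ℕ) (ht : 0 < t)
    (B₁ : Matrix (Fin v) (Fin (4 * t)) ℤ)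
    (hblockB : ∀ i : Fin v, ∃! b : Fin 2, ∀ j : Fin (4 * t),
      B₁ i j = if (j : ℕ) / (2 * t) = (b : ℕ) then 1 else 0)
    (n : ℕ) (hn : 1 ≤ n) (i : Fin (vnum v t n)) :
    ∃! b : Fin (2 ^ n), ∀ j : Fin (t * 4 ^ n),
      Bmat t v B₁ n i j = if (j : ℕ) / (t * 2 ^ n) = (b : ℕ) then 1 else 0 := by
  have hB₁ : HasBlockRows (2 * t) 2 B₁ := fun i =>
    let ⟨b, hb, _⟩ := hblockB i
    ⟨b, b.isLt, funext hb⟩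
  obtain ⟨n, rfl⟩ := Nat.exists_eq_add_of_le' hn
  obtain ⟨b, hb, hrow⟩ := hasBlockRows_Bmat t v B₁ hB₁ n i
  refine ⟨⟨b, hb⟩, congrFun hrow, fun b' hb' => Fin.ext ?_⟩
  exact (eq_of_blockIndicator_eq (by positivity) (by rw [four_pow_eq, mul_assoc]) hb
    (hrow.symm.trans (funext hb'))).symm

/-- Lemma 4(1) for `B_n`: in every row, partitioned into `2^n` consecutive blocks of
length `t·2^n`, exactly one block consists entirely of ones and all others of zeros. -/
theorem Bmat_row_blockiness
    (t v k : ℕ) (ht : 0 < t) (hv : 0 < v) (hk : 0 < k)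
    (B₁ : Matrix (Fin v) (Fin (4 * t)) ℤ)
    (hB01 : ∀ i j, B₁ i j = 0 ∨ B₁ i j = 1)
    (hblockB : ∀ i : Fin v, ∃! b : Fin 2, ∀ j : Fin (4 * t),
      B₁ i j = if (j : ℕ) / (2 * t) = (b : ℕ) then 1 else 0)
    (n : ℕ) (hn : 1 ≤ n) (i : Fin (vnum v t n)) :
    ∃! b : Fin (2 ^ n), ∀ j : Fin (t * 4 ^ n),
      Bmat t v B₁ n i j = if (j : ℕ) / (t * 2 ^ n) = (b : ℕ) then 1 else 0 :=
  Bmat_row_blockiness_general t v ht B₁ hblockB n hn i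
end

section
/- For every n ≥ 1, P_n · C_n = t · J_{t·4^n, v_n}, where v_n := (v+(2^{n+1}−4)t)·2^{n−1}. -/
/-!
Call a matrix `(d, s)`-balanced (`HasBlockColSums`) if every block of `d` consecutive rows has
all column sums equal to `s`. Row `i` of `P_n = J_{2^n,1} ⊗ K_{2^n} ⊗ J_{t,t·2^n}` is the
indicator of the row block of size `t·2^n` with index `2^n - 1 - (⌊i/t⌋ mod 2^n)`, so
`P_n X = t·J` whenever `X` is `(t·2^n, t)`-balanced. And `C_n` is `(t·2^n, t)`-balanced: for
`n = 1` this is the blockiness of the 0–1 matrix `C_1`; for `n ≥ 2` every row block of `C_n` is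
`I_2 ⊗ [α(C_{n-1}) | α(P_{n-1})]`, where `α` keeps the first row block, whose column sums are `t`
by induction and, for `P_{n-1}`, because `K` is a permutation matrix.
-/

open Matrix Kronecker

def HasBlockColSums {m l : ℕ} (X : Matrix (Fin m) (Fin l) ℤ) (d : ℕ) (s : ℤ) : Prop :=
  ∀ b < m / d, ∀ c, ∑ i : Fin m with i.val / d = b, X i c = s

@[simp] lemma divNat_finProdFinEquiv {m p : ℕ} (a : Fin m) (r : Fin p) :
    (finProdFinEquiv (a, r)).divNat = a :=
  congrArg Prod.fst (finProdFinEquiv.symm_apply_apply (a, r))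

@[simp] lemma modNat_finProdFinEquiv {m p : ℕ} (a : Fin m) (r : Fin p) :
    (finProdFinEquiv (a, r)).modNat = r :=
  congrArg Prod.snd (finProdFinEquiv.symm_apply_apply (a, r))

lemma sum_kron_apply {m n p q : ℕ} (A : Matrix (Fin m) (Fin n) ℤ) (B : Matrix (Fin p) (Fin q) ℤ)
    (P : Fin m → Prop) [DecidablePred P] (j : Fin (n * q)) :
    ∑ i : Fin (m * p) with P i.divNat, kron A B i j
      = (∑ i : Fin m with P i, A i j.divNat) * ∑ i, B i j.modNat := by
  rw [Finset.sum_filter, ← finProdFinEquiv.sum_comp, Fintype.sum_prod_type, Finset.sum_mul_sum,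
    Finset.sum_filter]
  simp [kron_apply]

lemma HasBlockColSums.castM {m n m' n' d : ℕ} {s : ℤ} {X : Matrix (Fin m) (Fin n) ℤ}
    (hX : HasBlockColSums X d s) (hm : m = m') (hn : n = n') :
    HasBlockColSums (castM hm hn X) d s := by
  subst hm hn
  exact hX

lemma HasBlockColSums.hstack {m l₁ l₂ d : ℕ} {s : ℤ} {X : Matrix (Fin m) (Fin l₁) ℤ}
    {Y : Matrix (Fin m) (Fin l₂) ℤ} (hX : HasBlockColSums X d s) (hY : HasBlockColSums Y d s) :
    HasBlockColSums (hstack X Y) d s := by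
  intro b hb c
  obtain ⟨c, rfl⟩ := finSumFinEquiv.surjective c
  rcases c with c | c
  · simpa [_root_.hstack] using hX b hb c
  · simpa [_root_.hstack] using hY b hb c

lemma HasBlockColSums.kron_of_colSums {m n p q d : ℕ} {s σ : ℤ} {X : Matrix (Fin m) (Fin n) ℤ}
    {B : Matrix (Fin p) (Fin q) ℤ} (hX : HasBlockColSums X d s) (hB : ∀ c, ∑ i, B i c = σ) :
    HasBlockColSums (kron X B) (d * p) (s * σ) := by
  intro b hb c
  rcases Nat.eq_zero_or_pos p with rfl | hp
  · simp at hb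
  rw [Nat.mul_div_mul_right _ _ hp] at hb
  simp only [mul_comm d p, ← Nat.div_div_eq_div_mul, ← Fin.coe_divNat]
  exact (sum_kron_apply X B (fun a => a.val / d = b) c).trans (by rw [hX b hb, hB])

lemma hasBlockColSums_Jmat (N : ℕ) : HasBlockColSums (Jmat N 1) 1 1 := by
  intro b hb c
  simp only [Nat.div_one] at hb
  simpa [Jmat] using Finset.card_eq_one.2 ⟨⟨b, hb⟩, by ext; simp [Fin.ext_iff]⟩

lemma sum_Kmat_apply {m : ℕ} (c : Fin m) : ∑ i, Kmat m i c = 1 := by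
  have := c.2
  simpa [Kmat] using Finset.card_eq_one.2 ⟨⟨m - 1 - c, by omega⟩, by ext; simp [Fin.ext_iff]; omega⟩

lemma sum_Jmat_apply {m l : ℕ} (c : Fin l) : ∑ i, Jmat m l i c = m := by
  simp [Jmat]

lemma sum_one_apply {m : ℕ} (c : Fin m) : ∑ i, (1 : Matrix (Fin m) (Fin m) ℤ) i c = 1 := by
  simp [Matrix.one_apply]

lemma HasBlockColSums.sum_alphaM_apply {m l k d : ℕ} {s : ℤ} {X : Matrix (Fin m) (Fin l) ℤ}
    (hX : HasBlockColSums X d s) (hd : m / k = d) (hpos : 0 < d) (c : Fin l) :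
    ∑ i, alphaM k X i c = s := by
  subst hd
  have hrange : Finset.univ.map (Fin.castLEEmb (Nat.div_le_self m k))
      = ({i : Fin m | i.val / (m / k) = 0} : Finset (Fin m)) := by
    ext i
    simp only [Finset.mem_map, Finset.mem_univ, true_and, Fin.coe_castLEEmb, Finset.mem_filter,
      Nat.div_eq_zero_iff, hpos.ne', false_or]
    exact ⟨fun ⟨a, ha⟩ => ha ▸ a.2, fun hi => ⟨⟨i, hi⟩, rfl⟩⟩
  rw [← hX 0 (Nat.div_pos (Nat.div_le_self m k) hpos) c, ← hrange, Finset.sum_map]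
  rfl

lemma HasBlockColSums.kron_one_kron_alphaM {m l k d N r : ℕ} {s : ℤ}
    {X : Matrix (Fin m) (Fin l) ℤ} (hX : HasBlockColSums X d s) (hd : m / k = d) (hpos : 0 < d) :
    HasBlockColSums (kron (kron (Jmat N 1) (1 : Matrix (Fin r) (Fin r) ℤ)) (alphaM k X))
      (r * d) s := by
  rw [← hd]
  simpa using ((hasBlockColSums_Jmat N).kron_of_colSums (sum_one_apply (m := r))).kron_of_colSums
    (hX.sum_alphaM_apply hd hpos)

lemma hasBlockColSums_Pmat (t n : ℕ) : HasBlockColSums (Pmat t n) (t * 2 ^ n) t := by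
  have h := ((hasBlockColSums_Jmat (2 ^ n)).kron_of_colSums
    (sum_Kmat_apply (m := 2 ^ n))).kron_of_colSums (sum_Jmat_apply (m := t) (l := t * 2 ^ n))
  rw [mul_one (1 : ℤ), one_mul (t : ℤ)] at h
  rw [show t * 2 ^ n = 1 * 2 ^ n * t by ring]
  exact h.castM _ _

lemma hasBlockColSums_of_card {m l d s : ℕ} {X : Matrix (Fin m) (Fin l) ℤ}
    (hX01 : ∀ i j, X i j = 0 ∨ X i j = 1)
    (hcard : ∀ b < m / d, ∀ c,
      (Finset.univ.filter fun i : Fin m => i.val / d = b ∧ X i c = 1).card = s) :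
    HasBlockColSums X d s := by
  intro b hb c
  have hX : ∀ i, X i c = if X i c = 1 then 1 else 0 := fun i => by
    rcases hX01 i c with h | h <;> simp [h]
  rw [Finset.sum_congr rfl fun i _ => hX i, Finset.sum_boole, Finset.filter_filter, hcard b hb c]

lemma hasBlockColSums_Cmat {t v : ℕ} (ht : 0 < t) {C₁ : Matrix (Fin (4 * t)) (Fin v) ℤ}
    (hC01 : ∀ i j, C₁ i j = 0 ∨ C₁ i j = 1)
    (hblockC : ∀ j : Fin v, ∀ b : Fin 2,
      (Finset.univ.filter fun i : Fin (4 * t) =>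
        (i : ℕ) / (2 * t) = (b : ℕ) ∧ C₁ i j = 1).card = t) (n : ℕ) :
    HasBlockColSums (Cmat t v C₁ (n + 1)) (t * 2 ^ (n + 1)) t := by
  induction n with
  | zero =>
    have h : HasBlockColSums C₁ (2 * t) t := hasBlockColSums_of_card hC01 fun b hb c => by
      rw [show 4 * t = 2 * (2 * t) by ring, Nat.mul_div_cancel _ (by omega)] at hb
      exact hblockC c ⟨b, hb⟩
    rw [show 2 * t = t * 2 ^ 1 by ring] at h
    exact h.castM _ _
  | succ n ih =>
    have hpos : 0 < t * 2 ^ (n + 1) := by positivity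
    have h := (ih.kron_one_kron_alphaM (N := 2 ^ (n + 2)) (r := 2) (t_four_pow_div t _)
      hpos).hstack ((hasBlockColSums_Pmat t (n + 1)).kron_one_kron_alphaM (N := 2 ^ (n + 2)) (r := 2)
        (t_four_pow_div t _) hpos)
    rw [show 2 * (t * 2 ^ (n + 1)) = t * 2 ^ (n + 1 + 1) by ring] at h
    exact h.castM _ _

lemma Pmat_apply (t n : ℕ) (i j : Fin (t * 4 ^ n)) :
    Pmat t n i j = if j.val / (t * 2 ^ n) = 2 ^ n - 1 - i.val / t % 2 ^ n then 1 else 0 := by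
  have hj : j.val / (t * 2 ^ n) < 2 ^ n :=
    Nat.div_lt_of_lt_mul (j.2.trans_eq (by rw [four_pow_eq]; ring))
  simp [Pmat, castM, kron_apply, Jmat, Kmat, Nat.mod_eq_of_lt hj]

lemma Pmat_mul_eq_smul_Jmat {t n l : ℕ} {X : Matrix (Fin (t * 4 ^ n)) (Fin l) ℤ}
    (hX : HasBlockColSums X (t * 2 ^ n) t) : Pmat t n * X = (t : ℤ) • Jmat (t * 4 ^ n) l := by
  ext i c
  simp only [Matrix.mul_apply, Pmat_apply, ite_mul, one_mul, zero_mul, ← Finset.sum_filter]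
  have ht : 0 < t := Nat.pos_of_mul_pos_right i.pos
  have hblocks : t * 4 ^ n / (t * 2 ^ n) = 2 ^ n :=
    Nat.div_eq_of_eq_mul_left (by positivity) (by rw [four_pow_eq]; ring)
  rw [hX _ (by rw [hblocks]; exact Nat.sub_one_sub_lt_of_lt (Nat.mod_lt _ (by positivity)))]
  simp [Jmat]

theorem Pmat_mul_Cmat_general
    (t v : ℕ) (ht : 0 < t)
    (C₁ : Matrix (Fin (4 * t)) (Fin v) ℤ)
    (hC01 : ∀ i j, C₁ i j = 0 ∨ C₁ i j = 1)
    (hblockC : ∀ j : Fin v, ∀ b : Fin 2,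
      (Finset.univ.filter fun i : Fin (4 * t) =>
        (i : ℕ) / (2 * t) = (b : ℕ) ∧ C₁ i j = 1).card = t)
    (n : ℕ) (hn : 1 ≤ n) :
    Pmat t n * Cmat t v C₁ n = (t : ℤ) • Jmat (t * 4 ^ n) (vnum v t n) := by
  obtain ⟨n, rfl⟩ := Nat.exists_eq_add_of_le' hn
  exact Pmat_mul_eq_smul_Jmat (hasBlockColSums_Cmat ht hC01 hblockC n)

/-- Equation (14): `P_n · C_n = t · J_{t·4^n, v_n}` where `v_n = (v+(2^{n+1}−4)t)·2^{n−1}`. -/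
theorem Pmat_mul_Cmat
    (t v k : ℕ) (ht : 0 < t) (hv : 0 < v) (hk : 0 < k)
    (C₁ : Matrix (Fin (4 * t)) (Fin v) ℤ)
    (hC01 : ∀ i j, C₁ i j = 0 ∨ C₁ i j = 1)
    (hblockC : ∀ j : Fin v, ∀ b : Fin 2,
      (Finset.univ.filter fun i : Fin (4 * t) =>
        (i : ℕ) / (2 * t) = (b : ℕ) ∧ C₁ i j = 1).card = t)
    (n : ℕ) (hn : 1 ≤ n) :
    Pmat t n * Cmat t v C₁ n = (t : ℤ) • Jmat (t * 4 ^ n) (vnum v t n) :=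
  Pmat_mul_Cmat_general t v ht C₁ hC01 hblockC n hn
end
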